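/- arXiv:2009.10540 — 4 statements merged into one kernel-verified Lean document; each statement's English description precedes it below -/
import Mathlib

section
/- Let P_1 and P_2 be polyhedra in a real normed space Z with int(P_1) ∩ P_2 = ∅, and for i = 1,2 let {(u_{ij}^*, s_{ij}) : j = 1,…,n_i} be a prime generator group of P_i. Then for any (j_1, j_2) ∈ {1,…,n_1} × {1,…,n_2} and any x_0 ∈ F_{j_1}°(P_1) ∩ F_{j_2}°(P_2), we have ker(u_{1 j_1}^*) = ker(u_{2 j_2}^*), and there exists r > 0 such that F_{j_1}°(P_1) ∩ B(x_0, r) = F_{j_2}°(P_2) ∩ B(x_0, r) = (x_0 + ker(u_{1 j_1}^*)) ∩ B(x_0, r). -/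
open Set

/-!
Near `x₀` every inactive constraint of either polyhedron is strict, so locally `P₁` is the
half-space `u₁ ≤ s₁` (with the open half-space `u₁ < s₁` inside `int P₁`) and `P₂` is the
half-space `u₂ ≤ s₂`. Disjointness of `int P₁` and `P₂` then says that every direction `v`
with `u₁ v < 0` has `u₂ v > 0`. Primality makes `u₁ ≠ 0`, and two functionals related in this
way have the same kernel. Both open faces coincide near `x₀` with the level set
`{u₁ = s₁} = x₀ + ker u₁`.
-/

open Filter Topology

theorem LinearMap.ker_eq_of_neg_imp_pos {𝕜 E : Type*} [Field 𝕜] [LinearOrder 𝕜]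
    [IsStrictOrderedRing 𝕜] [AddCommGroup E] [Module 𝕜 E] {f g : E →ₗ[𝕜] 𝕜} (hf : f ≠ 0)
    (h : ∀ v, f v < 0 → 0 < g v) : ker f = ker g := by
  obtain ⟨w, hw⟩ : ∃ w, f w < 0 := by
    obtain ⟨w, hw⟩ := DFunLike.ne_iff.1 hf
    rcases (show f w ≠ 0 from hw).lt_or_gt with hw | hw
    · exact ⟨w, hw⟩
    · exact ⟨-w, by simpa using hw⟩
  ext v
  simp only [mem_ker]
  constructor
  · intro hfv
    by_contra hgv
    -- `g` is positive on the line `w + t • v ⊆ {f < 0}`, yet affine and nonconstant along it.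
    have hpos := h (w + (-(g w) / g v) • v) (by simpa [hfv] using hw)
    simp [hgv] at hpos
  · intro hgv
    by_contra hfv
    rcases lt_or_gt_of_ne hfv with hlt | hgt
    · exact (h v hlt).ne' hgv
    · exact (h (-v) (by simpa using hgt)).ne' (by simp [hgv])

theorem LinearMap.pos_of_neg_of_eventually_lt_imp_lt {E : Type*} [AddCommGroup E] [Module ℝ E]
    [TopologicalSpace E] [ContinuousAdd E] [ContinuousSMul ℝ E] {f g : E →ₗ[ℝ] ℝ} {x₀ : E}
    (h : ∀ᶠ z in 𝓝 x₀, f z < f x₀ → g x₀ < g z) {v : E} (hv : f v < 0) : 0 < g v := by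
  have hline : Tendsto (fun t : ℝ => x₀ + t • v) (𝓝[>] 0) (𝓝 x₀) := by
    have hcont : Continuous fun t : ℝ => x₀ + t • v := by fun_prop
    simpa using (hcont.tendsto 0).mono_left nhdsWithin_le_nhds
  obtain ⟨t, hsep, ht⟩ := ((hline.eventually h).and self_mem_nhdsWithin).exists
  have hlt : g x₀ < g x₀ + t * g v := by
    simpa using hsep (by simpa using mul_neg_of_pos_of_neg (show 0 < t from ht) hv)
  exact pos_of_mul_pos_right (by linarith) (le_of_lt ht)

theorem image_add_left_setOf_eq_zero {F E M : Type*} [AddGroup E] [AddGroup M] [FunLike F E M]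
    [AddMonoidHomClass F E M] (f : F) (x₀ : E) :
    (x₀ + ·) '' {z | f z = 0} = {z | f z = f x₀} := by
  ext z
  simp only [image_add_left, mem_preimage, mem_ofPred_eq, map_add, map_neg, neg_add_eq_zero]
  exact eq_comm

section Polyhedron

variable {E ι : Type*} [TopologicalSpace E] [AddCommGroup E] [Module ℝ E]
  {u : ι → E →L[ℝ] ℝ} {s : ι → ℝ} {j : ι} {x₀ : E}

def polyhedron (u : ι → E →L[ℝ] ℝ) (s : ι → ℝ) : Set E := {z | ∀ i, u i z ≤ s i}

def openFace (u : ι → E →L[ℝ] ℝ) (s : ι → ℝ) (j : ι) : Set E :=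
  {z | u j z = s j ∧ ∀ i, i ≠ j → u i z < s i}

theorem ne_zero_of_polyhedron_ne (hprime : polyhedron u s ≠ {z | ∀ i, i ≠ j → u i z ≤ s i})
    (hx : u j x₀ = s j) : u j ≠ 0 := by
  intro h
  refine hprime (Set.ext fun z => ⟨fun hz i _ => hz i, fun hz i => ?_⟩)
  rcases eq_or_ne i j with rfl | hij
  · simp [← hx, h]
  · exact hz i hij

variable [Finite ι]

theorem eventually_forall_ne_lt (hx : ∀ i, i ≠ j → u i x₀ < s i) :
    ∀ᶠ z in 𝓝 x₀, ∀ i, i ≠ j → u i z < s i := by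
  refine eventually_all.2 fun i => ?_
  rcases eq_or_ne i j with rfl | hij
  · exact Eventually.of_forall fun _ h => absurd rfl h
  · exact ((u i).continuous.continuousAt.eventually_lt continuousAt_const (hx i hij)).mono
      fun _ h _ => h

theorem eventually_mem_polyhedron_iff (hx : ∀ i, i ≠ j → u i x₀ < s i) :
    ∀ᶠ z in 𝓝 x₀, z ∈ polyhedron u s ↔ u j z ≤ s j := by
  filter_upwards [eventually_forall_ne_lt hx] with z hz
  refine ⟨fun h => h j, fun h i => ?_⟩
  rcases eq_or_ne i j with rfl | hij
  · exact h
  · exact (hz i hij).le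

theorem eventually_mem_openFace_iff (hx : ∀ i, i ≠ j → u i x₀ < s i) :
    ∀ᶠ z in 𝓝 x₀, z ∈ openFace u s j ↔ u j z = s j := by
  filter_upwards [eventually_forall_ne_lt hx] with z hz
  exact ⟨And.left, fun h => ⟨h, hz⟩⟩

theorem eventually_lt_imp_mem_interior_polyhedron (hx : ∀ i, i ≠ j → u i x₀ < s i) :
    ∀ᶠ z in 𝓝 x₀, u j z < s j → z ∈ interior (polyhedron u s) := by
  filter_upwards [(eventually_mem_polyhedron_iff hx).eventually_nhds] with y hy hlt
  rw [mem_interior_iff_mem_nhds]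
  filter_upwards [hy, (u j).continuous.continuousAt.eventually_lt continuousAt_const hlt]
    with z hz hlt' using hz.2 hlt'.le

theorem eventually_lt_imp_lt_of_interior_inter_eq_empty {κ : Type*} [Finite κ]
    {u' : κ → E →L[ℝ] ℝ} {s' : κ → ℝ} {j' : κ}
    (hdisj : interior (polyhedron u s) ∩ polyhedron u' s' = ∅)
    (hx : ∀ i, i ≠ j → u i x₀ < s i) (hx' : ∀ i, i ≠ j' → u' i x₀ < s' i) :
    ∀ᶠ z in 𝓝 x₀, u j z < s j → s' j' < u' j' z := by
  filter_upwards [eventually_lt_imp_mem_interior_polyhedron hx,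
    eventually_mem_polyhedron_iff hx'] with z hint hmem hlt
  by_contra hle
  exact (eq_empty_iff_forall_notMem.1 hdisj) z ⟨hint hlt, hmem.2 (not_lt.1 hle)⟩

end Polyhedron

theorem stmt_9_general {Z : Type*} [NormedAddCommGroup Z] [NormedSpace ℝ Z]
    {n1 n2 : ℕ} (u1 : Fin n1 → Z →L[ℝ] ℝ) (s1 : Fin n1 → ℝ)
    (u2 : Fin n2 → Z →L[ℝ] ℝ) (s2 : Fin n2 → ℝ)
    (P1 P2 : Set Z)
    (hP1 : P1 = {z | ∀ i, u1 i z ≤ s1 i})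
    (hP2 : P2 = {z | ∀ i, u2 i z ≤ s2 i})
    (hprime1 : ∀ j, P1 ≠ {z | ∀ i, i ≠ j → u1 i z ≤ s1 i})
    (hdisj : interior P1 ∩ P2 = ∅)
    (j1 : Fin n1) (j2 : Fin n2) (x0 : Z)
    (hx1 : u1 j1 x0 = s1 j1 ∧ ∀ i, i ≠ j1 → u1 i x0 < s1 i)
    (hx2 : u2 j2 x0 = s2 j2 ∧ ∀ i, i ≠ j2 → u2 i x0 < s2 i) :
    {z | u1 j1 z = 0} = {z | u2 j2 z = 0} ∧
    ∃ r > (0 : ℝ),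
      {z | u1 j1 z = s1 j1 ∧ ∀ i, i ≠ j1 → u1 i z < s1 i} ∩ Metric.ball x0 r =
        {z | u2 j2 z = s2 j2 ∧ ∀ i, i ≠ j2 → u2 i z < s2 i} ∩ Metric.ball x0 r ∧
      {z | u1 j1 z = s1 j1 ∧ ∀ i, i ≠ j1 → u1 i z < s1 i} ∩ Metric.ball x0 r =
        ((x0 + ·) '' {z | u1 j1 z = 0}) ∩ Metric.ball x0 r := by
  subst hP1 hP2
  obtain ⟨hx1e, hx1⟩ := hx1
  obtain ⟨hx2e, hx2⟩ := hx2
  have hne : (u1 j1 : Z →ₗ[ℝ] ℝ) ≠ 0 := fun h =>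
    ne_zero_of_polyhedron_ne (hprime1 j1) hx1e (ContinuousLinearMap.coe_injective h)
  have hsep := eventually_lt_imp_lt_of_interior_inter_eq_empty hdisj hx1 hx2
  rw [← hx1e, ← hx2e] at hsep
  have hker : {z | u1 j1 z = 0} = {z | u2 j2 z = 0} := SetLike.ext'_iff.1
    (LinearMap.ker_eq_of_neg_imp_pos hne fun _ =>
      LinearMap.pos_of_neg_of_eventually_lt_imp_lt (f := (u1 j1 : Z →ₗ[ℝ] ℝ))
        (g := (u2 j2 : Z →ₗ[ℝ] ℝ)) hsep)
  have hlevel : {z | u1 j1 z = s1 j1} = {z | u2 j2 z = s2 j2} := by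
    rw [← hx1e, ← hx2e]
    simpa only [image_add_left_setOf_eq_zero] using congrArg ((x0 + ·) '' ·) hker
  obtain ⟨r, hr, hball⟩ := Metric.eventually_nhds_iff_ball.1
    ((eventually_mem_openFace_iff hx1).and (eventually_mem_openFace_iff hx2))
  have hface1 : openFace u1 s1 j1 ∩ Metric.ball x0 r = {z | u1 j1 z = s1 j1} ∩ Metric.ball x0 r :=
    Set.ext fun z => and_congr_left fun hz => (hball z hz).1
  have hface2 : openFace u2 s2 j2 ∩ Metric.ball x0 r = {z | u2 j2 z = s2 j2} ∩ Metric.ball x0 r :=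
    Set.ext fun z => and_congr_left fun hz => (hball z hz).2
  refine ⟨hker, r, hr, ?_, ?_⟩
  · exact hface1.trans (hlevel ▸ hface2.symm)
  · rw [image_add_left_setOf_eq_zero, hx1e]
    exact hface1

/-- For two polyhedra `P₁, P₂` with `int P₁ ∩ P₂ = ∅`, given prime generator
groups of each and a point `x₀ ∈ F_{j₁}°(P₁) ∩ F_{j₂}°(P₂)`, the null spaces of the two
active functionals coincide and near `x₀` both relatively open faces agree with the
affine hyperplane `x₀ + ker u`. -/
theorem stmt_9 {Z : Type*} [NormedAddCommGroup Z] [NormedSpace ℝ Z]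
    {n1 n2 : ℕ} (u1 : Fin n1 → Z →L[ℝ] ℝ) (s1 : Fin n1 → ℝ)
    (u2 : Fin n2 → Z →L[ℝ] ℝ) (s2 : Fin n2 → ℝ)
    (P1 P2 : Set Z)
    (hP1 : P1 = {z | ∀ i, u1 i z ≤ s1 i})
    (hP2 : P2 = {z | ∀ i, u2 i z ≤ s2 i})
    (hprime1 : ∀ j, P1 ≠ {z | ∀ i, i ≠ j → u1 i z ≤ s1 i})
    (hprime2 : ∀ j, P2 ≠ {z | ∀ i, i ≠ j → u2 i z ≤ s2 i})
    (hproper1 : P1 ≠ Set.univ) (hproper2 : P2 ≠ Set.univ)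
    (hdisj : interior P1 ∩ P2 = ∅)
    (j1 : Fin n1) (j2 : Fin n2) (x0 : Z)
    (hx1 : u1 j1 x0 = s1 j1 ∧ ∀ i, i ≠ j1 → u1 i x0 < s1 i)
    (hx2 : u2 j2 x0 = s2 j2 ∧ ∀ i, i ≠ j2 → u2 i x0 < s2 i) :
    {z | u1 j1 z = 0} = {z | u2 j2 z = 0} ∧
    ∃ r > (0 : ℝ),
      {z | u1 j1 z = s1 j1 ∧ ∀ i, i ≠ j1 → u1 i z < s1 i} ∩ Metric.ball x0 r =
        {z | u2 j2 z = s2 j2 ∧ ∀ i, i ≠ j2 → u2 i z < s2 i} ∩ Metric.ball x0 r ∧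
      {z | u1 j1 z = s1 j1 ∧ ∀ i, i ≠ j1 → u1 i z < s1 i} ∩ Metric.ball x0 r =
        ((x0 + ·) '' {z | u1 j1 z = 0}) ∩ Metric.ball x0 r :=
  stmt_9_general u1 s1 u2 s2 P1 P2 hP1 hP2 hprime1 hdisj j1 j2 x0 hx1 hx2
end

section
/- Let X and Y be real normed spaces. There exists a function f : X → Y whose graph gph(f) = {(x, f(x)) : x ∈ X} is the union of finitely many polyhedra in the product normed space X × Y if and only if Y is finite-dimensional. -/
/-!
If a polyhedron `P = {z | ∀ i, uᵢ z ≤ sᵢ}` lies in the graph of `f` and contains `(x, f x)`, then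
it also contains `(x, f x + y)` whenever every `uᵢ` vanishes at `(0, y)`, which forces `y = 0`.
So `y ↦ (uᵢ (0, y))ᵢ` embeds `Y` linearly into `ℝᵐ`. Conversely, if `Y` is finite-dimensional,
the graph of `0` is `X × {0}`, cut out by the coordinate functionals of `Y` and their negatives.
-/

open Set

/-- A polyhedron in a real normed space: a finite intersection of closed half-spaces. -/
def IsPolyhedron {Z : Type*} [NormedAddCommGroup Z] [NormedSpace ℝ Z] (P : Set Z) : Prop :=
  ∃ (n : ℕ) (u : Fin n → Z →L[ℝ] ℝ) (s : Fin n → ℝ), P = {z | ∀ i, u i z ≤ s i}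

section Polyhedron

variable {Z V : Type*} [NormedAddCommGroup Z] [NormedSpace ℝ Z]
  [NormedAddCommGroup V] [NormedSpace ℝ V]

theorem isPolyhedron_setOf_forall_le {ι : Type*} [Finite ι] (u : ι → Z →L[ℝ] ℝ) (s : ι → ℝ) :
    IsPolyhedron {z | ∀ i, u i z ≤ s i} := by
  obtain ⟨n, ⟨e⟩⟩ := Finite.exists_equiv_fin ι
  refine ⟨n, u ∘ e.symm, s ∘ e.symm, ?_⟩
  ext z
  exact e.symm.forall_congr_right.symm

theorem IsPolyhedron.preimage {P : Set V} (hP : IsPolyhedron P) (L : Z →L[ℝ] V) :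
    IsPolyhedron (L ⁻¹' P) := by
  obtain ⟨n, u, s, rfl⟩ := hP
  exact ⟨n, fun i => (u i).comp L, s, rfl⟩

theorem isPolyhedron_singleton_zero_pi (ι : Type*) [Fintype ι] :
    IsPolyhedron ({0} : Set (ι → ℝ)) := by
  convert isPolyhedron_setOf_forall_le
    (Sum.elim (fun i => ContinuousLinearMap.proj (R := ℝ) (φ := fun _ : ι => ℝ) i)
      (fun i => -ContinuousLinearMap.proj (R := ℝ) (φ := fun _ : ι => ℝ) i))
    (fun _ : ι ⊕ ι => (0 : ℝ))
  ext v
  simp only [mem_singleton_iff, mem_ofPred_eq, Sum.forall, Sum.elim_inl, Sum.elim_inr,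
    ContinuousLinearMap.proj_apply, neg_apply, neg_nonpos, ← forall_and,
    ← le_antisymm_iff, funext_iff, Pi.zero_apply]

theorem isPolyhedron_singleton_zero [FiniteDimensional ℝ V] : IsPolyhedron ({0} : Set V) := by
  let e := (Module.finBasis ℝ V).equivFunL
  convert (isPolyhedron_singleton_zero_pi _).preimage e.toContinuousLinearMap
  ext v
  simp

theorem IsPolyhedron.exists_add_mem {P : Set Z} (hP : IsPolyhedron P) :
    ∃ (m : ℕ) (L : Z →L[ℝ] (Fin m → ℝ)), ∀ z ∈ P, ∀ w, L w = 0 → z + w ∈ P := by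
  obtain ⟨m, u, s, rfl⟩ := hP
  refine ⟨m, ContinuousLinearMap.pi u, fun z hz w hw i => ?_⟩
  have hwi : u i w = 0 := congrFun hw i
  simpa [hwi] using hz i

end Polyhedron

theorem finiteDimensional_of_isPolyhedron_subset_graph {X Y : Type*} [NormedAddCommGroup X]
    [NormedSpace ℝ X] [NormedAddCommGroup Y] [NormedSpace ℝ Y] {f : X → Y} {P : Set (X × Y)}
    (hP : IsPolyhedron P) (hne : P.Nonempty) (hPf : P ⊆ range fun x => (x, f x)) :
    FiniteDimensional ℝ Y := by
  obtain ⟨m, L, hL⟩ := hP.exists_add_mem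
  obtain ⟨z, hz⟩ := hne
  refine FiniteDimensional.of_injective (L.toLinearMap.comp (LinearMap.inr ℝ X Y)) ?_
  rw [← LinearMap.ker_eq_bot, LinearMap.ker_eq_bot']
  intro y hy
  obtain ⟨x, rfl⟩ := hPf hz
  obtain ⟨x', hx'⟩ := hPf (hL _ hz _ hy)
  simp only [Prod.ext_iff] at hx'
  obtain ⟨rfl, hfy⟩ := hx'
  simpa using hfy.symm

/-- There exists a function `f : X → Y` whose graph is a finite union of
polyhedra in `X × Y` if and only if `Y` is finite-dimensional. -/
theorem stmt_10 {X Y : Type*} [NormedAddCommGroup X] [NormedSpace ℝ X]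
    [NormedAddCommGroup Y] [NormedSpace ℝ Y] :
    (∃ f : X → Y, ∃ (n : ℕ) (Λ : Fin n → Set (X × Y)),
        (∀ i, IsPolyhedron (Λ i)) ∧
        Set.range (fun x => (x, f x)) = ⋃ i, Λ i) ↔
      FiniteDimensional ℝ Y := by
  constructor
  · rintro ⟨f, n, Λ, hΛ, hgraph⟩
    obtain ⟨i, hi⟩ := mem_iUnion.1 (hgraph ▸ mem_range_self 0 : (0, f 0) ∈ ⋃ i, Λ i)
    exact finiteDimensional_of_isPolyhedron_subset_graph (hΛ i) ⟨_, hi⟩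
      (hgraph ▸ subset_iUnion Λ i)
  · intro hY
    refine ⟨0, 1, fun _ => Prod.snd ⁻¹' {0},
      fun _ => isPolyhedron_singleton_zero.preimage (ContinuousLinearMap.snd ℝ X Y), ?_⟩
    ext z
    simp [Prod.ext_iff, eq_comm]
end

section
/- Let Y be a real normed space, Y_1 a closed linear subspace of Y, and Z a finite-dimensional linear subspace of Y with Y_1 ∩ Z = {0}. Let Π_Z : Y_1 + Z → Z be the projection Π_Z(y + z) = z for (y, z) ∈ Y_1 × Z. Let C be a convex cone in Y with (Y_1 + Z) ∩ int(C) ≠ ∅, and set C_Z = Π_Z((Y_1 + Z) ∩ C). Then for every subset B of Z: (Y_1 + B) \ ((Y_1 + B) + int(C)) = Y_1 + (B \ (B + int_Z(C_Z))), where int_Z(C_Z) denotes the interior of C_Z in the normed space Z. Equivalently, the weak Pareto efficient points of Y_1 + B with respect to C equal the Minkowski sum of Y_1 with the weak Pareto efficient points of B with respect to C_Z. -/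
/-!
Translating by `Y₁` is free, so `y + b` (with `y ∈ Y₁`, `b ∈ Z`) is dominated in `Y₁ + B`
through `int C` exactly when `b` is dominated in `B` through `Π_Z ((Y₁ + Z) ∩ int C)`. The
latter set is `int_Z C_Z`: one inclusion because `int C` is open, the other because `C` is
convex and has an interior point over `Z`, from which segments reach into `int C`.
-/

open Set Pointwise Filter Topology

/-- `Π_Z ((Y₁ + Z) ∩ K)` as a subset of `Z`; for `K = C` this is the paper's `C_Z`. -/
def projAlong {R Y : Type*} [Ring R] [AddCommGroup Y] [Module R Y] (Y1 Z : Submodule R Y)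
    (K : Set Y) : Set Z :=
  {z : Z | ∃ y ∈ Y1, y + (z : Y) ∈ K}

section Algebra

variable {R Y : Type*} [Ring R] [AddCommGroup Y] [Module R Y] {Y1 Z : Submodule R Y}

theorem add_mem_add_add_iff {K : Set Y} {B : Set Z} {y : Y} (hy : y ∈ Y1) (b : Z) :
    y + (b : Y) ∈ ((Y1 : Set Y) + Subtype.val '' B) + K ↔ b ∈ B + projAlong Y1 Z K := by
  constructor
  · rintro ⟨_, ⟨y', hy', _, ⟨b', hb', rfl⟩, rfl⟩, k, hk, hsum⟩
    refine ⟨b', hb', b - b', ⟨y - y', Y1.sub_mem hy hy', ?_⟩, add_sub_cancel b' b⟩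
    convert hk using 1
    rw [eq_sub_of_add_eq' hsum]
    push_cast
    abel
  · rintro ⟨b', hb', p, ⟨y', hy', hp⟩, rfl⟩
    refine ⟨(y - y') + b', ⟨y - y', Y1.sub_mem hy hy', b', ⟨b', hb', rfl⟩, rfl⟩, y' + p, hp, ?_⟩
    push_cast
    abel

theorem add_diff_add_add_eq (K : Set Y) (B : Set Z) :
    ((Y1 : Set Y) + Subtype.val '' B) \ (((Y1 : Set Y) + Subtype.val '' B) + K) =
      (Y1 : Set Y) + Subtype.val '' (B \ (B + projAlong Y1 Z K)) := by
  ext w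
  constructor
  · rintro ⟨⟨y, hy, _, ⟨b, hb, rfl⟩, rfl⟩, hnot⟩
    exact ⟨y, hy, b, ⟨b, ⟨hb, fun h => hnot ((add_mem_add_add_iff hy b).mpr h)⟩, rfl⟩, rfl⟩
  · rintro ⟨y, hy, _, ⟨b, ⟨hb, hnot⟩, rfl⟩, rfl⟩
    exact ⟨⟨y, hy, b, ⟨b, hb, rfl⟩, rfl⟩, fun h => hnot ((add_mem_add_add_iff hy b).mp h)⟩

end Algebra

section Topology

variable {Y : Type*} [AddCommGroup Y] [Module ℝ Y] [TopologicalSpace Y] {Y1 Z : Submodule ℝ Y}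

theorem projAlong_interior_subset [ContinuousAdd Y] (C : Set Y) :
    projAlong Y1 Z (interior C) ⊆ interior (projAlong Y1 Z C) := by
  rintro z ⟨y, hy, hyz⟩
  have hopen : IsOpen {ζ : Z | y + (ζ : Y) ∈ interior C} :=
    isOpen_interior.preimage (continuous_const.add continuous_subtype_val)
  have hsub : {ζ : Z | y + (ζ : Y) ∈ interior C} ⊆ projAlong Y1 Z C :=
    fun ζ hζ => ⟨y, hy, interior_subset hζ⟩
  exact interior_maximal hsub hopen hyz

/-- Push `z` slightly away from the interior point `y₀ + z₀`; then `y₀ + z₀` and a point of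
`C` over the pushed point span a segment of `C` through a point over `z`, which is interior. -/
theorem interior_projAlong_subset [IsTopologicalAddGroup Y] [ContinuousSMul ℝ Y] {C : Set Y}
    (hC : Convex ℝ C) {y0 : Y} (hy0 : y0 ∈ Y1) {z0 : Z} (hint : y0 + (z0 : Y) ∈ interior C) :
    interior (projAlong Y1 Z C) ⊆ projAlong Y1 Z (interior C) := by
  intro z hz
  have hline : Tendsto (fun t : ℝ => z + t • (z - z0)) (𝓝[>] 0) (𝓝 z) := by
    have hcont : Continuous fun t : ℝ => z + t • (z - z0) := by fun_prop
    exact (hcont.tendsto' 0 z (by simp)).mono_left nhdsWithin_le_nhds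
  obtain ⟨t, hmem, ht⟩ :=
    ((hline.eventually (isOpen_interior.mem_nhds hz)).and self_mem_nhdsWithin).exists
  obtain ⟨y, hy, hyC⟩ : z + t • (z - z0) ∈ projAlong Y1 Z C := interior_subset hmem
  replace ht : (0 : ℝ) < t := ht
  have h1t : (0 : ℝ) < 1 + t := by linarith
  refine ⟨(t / (1 + t)) • y0 + (1 / (1 + t)) • y,
    Y1.add_mem (Y1.smul_mem _ hy0) (Y1.smul_mem _ hy), ?_⟩
  convert hC.combo_interior_self_mem_interior hint hyC (div_pos ht h1t)
    (div_pos one_pos h1t).le (by field_simp; ring) using 1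
  push_cast
  match_scalars <;> field_simp; ring

theorem interior_projAlong [IsTopologicalAddGroup Y] [ContinuousSMul ℝ Y] {C : Set Y}
    (hC : Convex ℝ C) (hne : (((Y1 : Set Y) + (Z : Set Y)) ∩ interior C).Nonempty) :
    interior (projAlong Y1 Z C) = projAlong Y1 Z (interior C) := by
  obtain ⟨_, ⟨y0, hy0, z0, hz0, rfl⟩, hint⟩ := hne
  exact (interior_projAlong_subset hC hy0 (z0 := ⟨z0, hz0⟩) hint).antisymm
    (projAlong_interior_subset C)

end Topology

theorem stmt_16_general {Y : Type*} [NormedAddCommGroup Y] [NormedSpace ℝ Y]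
    (Y1 Z : Submodule ℝ Y)
    (C : Set Y) (hCconv : Convex ℝ C)
    (hne : (((Y1 : Set Y) + (Z : Set Y)) ∩ interior C).Nonempty)
    (CZ : Set Z) (hCZ : CZ = {z : Z | ∃ y ∈ Y1, y + (z : Y) ∈ C}) :
    ∀ B : Set Z,
      ((Y1 : Set Y) + Subtype.val '' B) \
          (((Y1 : Set Y) + Subtype.val '' B) + interior C) =
        (Y1 : Set Y) + Subtype.val '' (B \ (B + interior CZ)) := by
  intro B
  have hCZ' : CZ = projAlong Y1 Z C := hCZ
  rw [hCZ', interior_projAlong hCconv hne]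
  exact add_diff_add_add_eq (interior C) B

/-- For every subset `B` of `Z`,
`(Y₁ + B) \ ((Y₁ + B) + int C) = Y₁ + (B \ (B + int_Z C_Z))`, i.e. the weak Pareto
efficient points of `Y₁ + B` with respect to `C` equal `Y₁ + WE(B, C_Z)`.
Here `C_Z = Π_Z ((Y₁ ⊕ Z) ∩ C) = {z : Z | ∃ y ∈ Y₁, y + z ∈ C}` is expressed inside the
subtype `Z`, whose subspace topology gives `int_Z`. -/
theorem stmt_16 {Y : Type*} [NormedAddCommGroup Y] [NormedSpace ℝ Y]
    (Y1 Z : Submodule ℝ Y) (hY1closed : IsClosed (Y1 : Set Y))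
    (hZfin : FiniteDimensional ℝ Z) (hinf : Y1 ⊓ Z = ⊥)
    (C : Set Y) (hCconv : Convex ℝ C)
    (hCcone : ∀ t : ℝ, 0 ≤ t → t • C ⊆ C)
    (hne : (((Y1 : Set Y) + (Z : Set Y)) ∩ interior C).Nonempty)
    (CZ : Set Z) (hCZ : CZ = {z : Z | ∃ y ∈ Y1, y + (z : Y) ∈ C}) :
    ∀ B : Set Z,
      ((Y1 : Set Y) + Subtype.val '' B) \
          (((Y1 : Set Y) + Subtype.val '' B) + interior C) =
        (Y1 : Set Y) + Subtype.val '' (B \ (B + interior CZ)) :=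
  stmt_16_general Y1 Z C hCconv hne CZ hCZ
end

section
/- Let X and Y be real normed spaces and C a convex cone in Y with int(C) ≠ ∅. Let P_1, …, P_m be polyhedra in X with X = ⋃_{i=1}^m P_i, int(P_i) ≠ ∅ for each i, and P_i ∩ int(P_{i'}) = ∅ for i ≠ i'. Let f : X → Y and φ_1, …, φ_l : X → ℝ, and suppose there exist continuous linear operators T_i : X → Y, points b_i ∈ Y, continuous linear functionals x_{ij}^* on X and reals c_{ij} (i = 1,…,m, j = 1,…,l) such that for each i and all x ∈ P_i: f(x) = T_i x + b_i and φ_j(x) = ⟨x_{ij}^*, x⟩ − c_{ij} for all j. Let A = {x ∈ X : φ_j(x) ≤ 0 for all j = 1,…,l}, A_i = {x ∈ P_i : ⟨x_{ij}^*, x⟩ ≤ c_{ij} for all j}, S^w = {x ∈ A : there is no u ∈ A with f(x) − f(u) ∈ int(C)}, and S_i^w = {x ∈ A_i : there is no u ∈ A_i with T_i x − T_i u ∈ int(C)}. If f(A) + C is a convex subset of Y, then there exist finitely many polyhedra F_1, …, F_p in X such that S^w = ⋃_{k=1}^p F_k and, for each k, there exists i ∈ {1,…,m} with A_i ≠ ∅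 such that F_k is an exposed face of A_i and F_k ⊆ S_i^w. -/
open Set Pointwise

/-- `F` is an exposed face of `P`: the set of maximizers over `P` of some continuous
linear functional. -/
def IsExposedFace {Z : Type*} [NormedAddCommGroup Z] [NormedSpace ℝ Z]
    (P F : Set Z) : Prop :=
  ∃ l : Z →L[ℝ] ℝ, F = {u ∈ P | ∀ v ∈ P, l v ≤ l u}

/-!
Since `f(A) + C` is convex, a weak Pareto point `x` can be scalarized: separating `f x` from the
open convex set `f(A) + int C` gives a functional `g`, positive on `int C`, such that `x` minimizes
`g ∘ f` over `A`. If `x ∈ Aᵢ`, the minimizers of the linear function `g ∘ Tᵢ` over `Aᵢ` form an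
exposed face of `Aᵢ` through `x`, each point of which still minimizes `g ∘ f` over `A` and is
therefore weakly Pareto both for the whole problem and for the `i`-th subproblem. A polyhedron
has only finitely many exposed faces, since a nonempty exposed face is cut out by the constraints
that are active on all of it; so `S^w` is a finite union of such faces.
-/

section Polyhedron

variable {E : Type*} [AddCommGroup E] [Module ℝ E] [TopologicalSpace E]
  {ι : Type*} (w : ι → E →L[ℝ] ℝ) (d : ι → ℝ)

theorem Convex.exists_mem_eq_imp_forall_eq [Finite ι] {F : Set E} (hFc : Convex ℝ F)
    (hFne : F.Nonempty) (hFQ : ∀ z ∈ F, ∀ k, w k z ≤ d k) :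
    ∃ x ∈ F, ∀ k, w k x = d k → ∀ z ∈ F, w k z = d k := by
  classical
  cases nonempty_fintype ι
  suffices ∀ s : Finset ι, ∃ x ∈ F, ∀ k ∈ s, w k x = d k → ∀ z ∈ F, w k z = d k by
    simpa using this Finset.univ
  intro s
  induction s using Finset.induction_on with
  | empty =>
    obtain ⟨x, hx⟩ := hFne
    exact ⟨x, hx, by simp⟩
  | insert k s _ ih =>
    obtain ⟨x, hxF, hx⟩ := ih
    by_cases hk : ∀ z ∈ F, w k z = d k
    · refine ⟨x, hxF, fun k' hk' => ?_⟩
      rcases Finset.mem_insert.1 hk' with rfl | hk'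
      exacts [fun _ => hk, hx k' hk']
    push Not at hk
    obtain ⟨z, hzF, hzk⟩ := hk
    have hmid : ∀ k', w k' ((1 / 2 : ℝ) • x + (1 / 2 : ℝ) • z) = (w k' x + w k' z) / 2 := by
      intro k'; simp only [map_add, map_smul, smul_eq_mul]; ring
    -- the midpoint of `x` and `z` is tight only where both are, and `z` is slack at `k`
    refine ⟨(1 / 2 : ℝ) • x + (1 / 2 : ℝ) • z,
      hFc hxF hzF (by norm_num) (by norm_num) (by norm_num), ?_⟩
    simp only [Finset.mem_insert, forall_eq_or_imp, hmid]
    refine ⟨fun h => absurd h ?_, fun k' hk' h => hx k' hk' ?_⟩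
    · linarith [hFQ x hxF k, lt_of_le_of_ne (hFQ z hzF k) hzk]
    · linarith [hFQ x hxF k', hFQ z hzF k']

theorem exists_pos_forall_add_smul_sub_le [Finite ι] {x y : E} (hx : ∀ k, w k x ≤ d k)
    (hxy : ∀ k, w k x = d k → w k y = d k) :
    ∃ ε > (0 : ℝ), ∀ k, w k (x + ε • (x - y)) ≤ d k := by
  have hline : ∀ k (ε : ℝ), w k (x + ε • (x - y)) = w k x + ε * (w k x - w k y) := by
    intro k ε; simp only [map_add, map_smul, map_sub, smul_eq_mul]
  have h : ∀ᶠ ε in nhds (0 : ℝ), ∀ k, w k (x + ε • (x - y)) ≤ d k := by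
    refine Filter.eventually_all.2 fun k => ?_
    simp only [hline]
    rcases (hx k).lt_or_eq with hlt | heq
    · have hc : Continuous fun ε : ℝ => w k x + ε * (w k x - w k y) := by fun_prop
      exact (hc.tendsto' 0 _ (by simp)).eventually (Iio_mem_nhds hlt) |>.mono fun _ => le_of_lt
    · exact Filter.Eventually.of_forall fun ε => by simp [heq, hxy k heq]
  obtain ⟨ε, hε, hε0⟩ := ((h.filter_mono nhdsWithin_le_nhds).and
    (self_mem_nhdsWithin (s := Ioi (0 : ℝ)))).exists
  exact ⟨ε, hε0, hε⟩

theorem IsExposed.eq_sep_active [Finite ι] {F : Set E}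
    (hF : IsExposed ℝ {x | ∀ k, w k x ≤ d k} F) (hne : F.Nonempty) :
    F = {x ∈ {x | ∀ k, w k x ≤ d k} | ∀ k, (∀ z ∈ F, w k z = d k) → w k x = d k} := by
  have hQc : Convex ℝ {x | ∀ k, w k x ≤ d k} := by
    rw [ofPred_forall]
    exact convex_iInter fun k => convex_halfSpace_le (w k).toLinearMap.isLinear (d k)
  have hFc := hF.convex hQc
  obtain ⟨l, rfl⟩ := hF hne
  refine Subset.antisymm (fun x hx => ⟨hx.1, fun k hk => hk x hx⟩) ?_
  rintro y ⟨hyQ, hy⟩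
  -- push a point `x ∈ F` that is tight only on the constraints active on all of `F` slightly
  -- away from `y`; maximality of `l` at `x` then gives `l x ≤ l y`
  obtain ⟨x, hxF, hx⟩ := hFc.exists_mem_eq_imp_forall_eq w d hne fun z hz => hz.1
  obtain ⟨ε, hε, hεQ⟩ := exists_pos_forall_add_smul_sub_le w d hxF.1 fun k hk => hy k (hx k hk)
  have hlε : l (x + ε • (x - y)) ≤ l x := hxF.2 _ hεQ
  simp only [map_add, map_smul, map_sub, smul_eq_mul] at hlε
  have hly : l x ≤ l y := by nlinarith
  exact ⟨hyQ, fun v hv => (hxF.2 v hv).trans hly⟩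

theorem finite_setOf_isExposed [Finite ι] :
    {F | IsExposed ℝ {x | ∀ k, w k x ≤ d k} F}.Finite := by
  refine ((finite_range fun I : Set ι =>
    {x ∈ {x | ∀ k, w k x ≤ d k} | ∀ k, k ∈ I → w k x = d k}).insert ∅).subset ?_
  intro F hF
  rcases F.eq_empty_or_nonempty with rfl | hne
  · exact mem_insert _ _
  · exact mem_insert_of_mem _ ⟨_, (IsExposed.eq_sep_active w d hF hne).symm⟩

end Polyhedron

section IsPolyhedron

variable {X : Type*} [NormedAddCommGroup X] [NormedSpace ℝ X]

theorem isPolyhedron_setOf_forall_le_s19 {ι : Type*} [Finite ι] (w : ι → X →L[ℝ] ℝ) (d : ι → ℝ) :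
    IsPolyhedron {x | ∀ k, w k x ≤ d k} := by
  obtain ⟨n, ⟨e⟩⟩ := Finite.exists_equiv_fin ι
  exact ⟨n, w ∘ e.symm, d ∘ e.symm, by ext x; simp [e.symm.forall_congr_left]⟩

theorem IsPolyhedron.inter {P Q : Set X} (hP : IsPolyhedron P) (hQ : IsPolyhedron Q) :
    IsPolyhedron (P ∩ Q) := by
  obtain ⟨n, u, s, rfl⟩ := hP
  obtain ⟨n', u', s', rfl⟩ := hQ
  convert isPolyhedron_setOf_forall_le_s19 (Sum.elim u u') (Sum.elim s s') using 1
  ext x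
  simp [Sum.forall]

theorem IsExposedFace.isExposed {Q F : Set X} (hF : IsExposedFace Q F) : IsExposed ℝ Q F :=
  fun _ => hF

theorem IsExposedFace.isPolyhedron {Q F : Set X} (hF : IsExposedFace Q F) (hQ : IsPolyhedron Q) :
    IsPolyhedron F := by
  obtain ⟨l, a, rfl⟩ := hF.isExposed.eq_inter_halfSpace
  exact hQ.inter (⟨1, fun _ => -l, fun _ => -a, by ext; simp⟩ : IsPolyhedron {x | a ≤ l x})

theorem IsPolyhedron.finite_setOf_isExposedFace {Q : Set X} (hQ : IsPolyhedron Q) :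
    {F | IsExposedFace Q F}.Finite := by
  obtain ⟨n, u, s, rfl⟩ := hQ
  exact (finite_setOf_isExposed u s).subset fun _ hF => IsExposedFace.isExposed hF

end IsPolyhedron

section WeakPareto

variable {X Y : Type*} [AddCommGroup Y] [Module ℝ Y]

theorem Convex.add_subset_of_smul_subset {C : Set Y} (hC : Convex ℝ C)
    (hcone : ∀ t : ℝ, 0 ≤ t → t • C ⊆ C) : C + C ⊆ C := by
  rintro _ ⟨a, ha, b, hb, rfl⟩
  have hmid : (1 / 2 : ℝ) • a + (1 / 2 : ℝ) • b ∈ C :=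
    hC ha hb (by norm_num) (by norm_num) (by norm_num)
  simpa [smul_add, smul_smul] using hcone 2 zero_le_two (smul_mem_smul_set hmid)

variable [TopologicalSpace Y]

def weakParetoSet (C : Set Y) (Q : Set X) (h : X → Y) : Set X :=
  {x ∈ Q | ¬ ∃ u ∈ Q, h x - h u ∈ interior C}

theorem mem_weakParetoSet_of_forall_le {C : Set Y} {Q : Set X} {h : X → Y} {g : Y →L[ℝ] ℝ}
    {x : X} (hg : ∀ e ∈ interior C, 0 < g e) (hx : x ∈ Q) (hmin : ∀ v ∈ Q, g (h x) ≤ g (h v)) :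
    x ∈ weakParetoSet C Q h := by
  refine ⟨hx, fun ⟨u, hu, hxu⟩ => ?_⟩
  have := hg _ hxu
  rw [map_sub] at this
  linarith [hmin u hu]

variable [IsTopologicalAddGroup Y] [ContinuousSMul ℝ Y]

theorem exists_pos_on_interior_le_of_convex_add {C S : Set Y} (hCconv : Convex ℝ C)
    (hCcone : ∀ t : ℝ, 0 ≤ t → t • C ⊆ C) (hCint : (interior C).Nonempty)
    (hconv : Convex ℝ (S + C)) {y₀ : Y} (hy₀S : y₀ ∈ S) (hmin : ∀ s ∈ S, y₀ - s ∉ interior C) :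
    ∃ g : Y →L[ℝ] ℝ, (∀ e ∈ interior C, 0 < g e) ∧ ∀ s ∈ S, g y₀ ≤ g s := by
  obtain ⟨e₀, he₀⟩ := hCint
  have h0 : (0 : Y) ∈ C := by
    simpa using hCcone 0 le_rfl (smul_mem_smul_set (a := (0 : ℝ)) (interior_subset he₀))
  have hCi : C + interior C = interior C :=
    Subset.antisymm (subset_interior_add_right.trans
        (interior_mono (hCconv.add_subset_of_smul_subset hCcone)))
      fun e he => ⟨0, h0, e, he, zero_add e⟩
  have hopen : IsOpen (S + interior C) := isOpen_interior.add_left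
  have hconv' : Convex ℝ (S + interior C) := by
    rw [← hCi, ← add_assoc]
    exact hconv.add hCconv.interior
  have hy₀ : y₀ ∉ S + interior C := by
    rintro ⟨s, hs, e, he, rfl⟩
    exact hmin s hs (by simpa using he)
  obtain ⟨g, hg⟩ := geometric_hahn_banach_point_open hconv' hopen hy₀
  have hgpos : ∀ e ∈ interior C, 0 < g e := fun e he => by
    have := hg _ (add_mem_add hy₀S he)
    rw [map_add] at this
    linarith
  refine ⟨g, hgpos, fun s hs => le_of_forall_pos_lt_add fun ε hε => ?_⟩
  have ht : 0 < ε / g e₀ := div_pos hε (hgpos e₀ he₀)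
  have hte : (ε / g e₀) • e₀ ∈ interior C := by
    refine interior_mono (hCcone _ ht.le) ?_
    rw [interior_smul₀ ht.ne']
    exact smul_mem_smul_set he₀
  have := hg _ (add_mem_add hs hte)
  rwa [map_add, map_smul, smul_eq_mul, div_mul_cancel₀ _ (hgpos e₀ he₀).ne'] at this

end WeakPareto

theorem exists_isExposedFace_mem_subset_weakParetoSet {X Y : Type*} [NormedAddCommGroup X]
    [NormedSpace ℝ X] [AddCommGroup Y] [Module ℝ Y] [TopologicalSpace Y]
    {C : Set Y} {A Q : Set X} {f : X → Y} {T : X →L[ℝ] Y} {b : Y} {g : Y →L[ℝ] ℝ} {x : X}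
    (hg : ∀ e ∈ interior C, 0 < g e) (hQA : Q ⊆ A) (hf : ∀ z ∈ Q, f z = T z + b) (hx : x ∈ Q)
    (hmin : ∀ v ∈ A, g (f x) ≤ g (f v)) :
    ∃ F, IsExposedFace Q F ∧ x ∈ F ∧ F ⊆ weakParetoSet C A f ∧ F ⊆ weakParetoSet C Q T := by
  have hgf : ∀ z ∈ Q, g (f z) = g (T z) + g b := fun z hz => by rw [hf z hz, map_add]
  refine ⟨{u ∈ Q | ∀ v ∈ Q, g (T u) ≤ g (T v)}, ⟨-(g.comp T), by ext; simp⟩,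
    ⟨hx, fun v hv => ?_⟩, fun u hu => ?_, fun u hu => mem_weakParetoSet_of_forall_le hg hu.1 hu.2⟩
  · have := hmin v (hQA hv)
    rw [hgf x hx, hgf v hv] at this
    linarith
  · refine mem_weakParetoSet_of_forall_le hg (hQA hu.1) fun v hv => ?_
    calc g (f u) = g (T u) + g b := hgf u hu.1
      _ ≤ g (T x) + g b := by linarith [hu.2 x hx]
      _ = g (f x) := (hgf x hx).symm
      _ ≤ g (f v) := hmin v hv

theorem Set.Finite.exists_fin_eq_iUnion {α : Type*} {𝒢 : Set (Set α)} (h𝒢 : 𝒢.Finite) :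
    ∃ (p : ℕ) (F : Fin p → Set α), ⋃₀ 𝒢 = ⋃ k, F k ∧ ∀ k, F k ∈ 𝒢 := by
  obtain ⟨p, F, hF⟩ := h𝒢.fin_embedding
  exact ⟨p, F, by rw [← sUnion_range, hF], fun k => hF ▸ mem_range_self k⟩

theorem stmt_19_general {X Y : Type*} [NormedAddCommGroup X] [NormedSpace ℝ X]
    [NormedAddCommGroup Y] [NormedSpace ℝ Y]
    (C : Set Y) (hCconv : Convex ℝ C)
    (hCcone : ∀ t : ℝ, 0 ≤ t → t • C ⊆ C)
    (hCint : (interior C).Nonempty)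
    {m l : ℕ}
    (P : Fin m → Set X)
    (hpoly : ∀ i, IsPolyhedron (P i)) (hcover : (⋃ i, P i) = Set.univ)
    (f : X → Y) (φ : Fin l → X → ℝ)
    (T : Fin m → X →L[ℝ] Y) (b : Fin m → Y)
    (xs : Fin m → Fin l → X →L[ℝ] ℝ) (c : Fin m → Fin l → ℝ)
    (hf : ∀ i, ∀ x ∈ P i, f x = T i x + b i)
    (hφ : ∀ i, ∀ x ∈ P i, ∀ j, φ j x = xs i j x - c i j)
    (A : Set X) (hA : A = {x | ∀ j, φ j x ≤ 0})
    (Ai : Fin m → Set X) (hAi : ∀ i, Ai i = {x ∈ P i | ∀ j, xs i j x ≤ c i j})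
    (Sw : Set X) (hSw : Sw = {x ∈ A | ¬ ∃ u ∈ A, f x - f u ∈ interior C})
    (Siw : Fin m → Set X)
    (hSiw : ∀ i, Siw i = {x ∈ Ai i | ¬ ∃ u ∈ Ai i, T i x - T i u ∈ interior C})
    (hconv : Convex ℝ (f '' A + C)) :
    ∃ (p : ℕ) (F : Fin p → Set X),
      (∀ k, IsPolyhedron (F k)) ∧
      Sw = ⋃ k, F k ∧
      ∀ k, ∃ i, (Ai i).Nonempty ∧ IsExposedFace (Ai i) (F k) ∧ F k ⊆ Siw i := by
  replace hSw : Sw = weakParetoSet C A f := hSw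
  replace hSiw : ∀ i, Siw i = weakParetoSet C (Ai i) (T i) := hSiw
  have hAiP : ∀ i, Ai i ⊆ P i := fun i x hx => (hAi i ▸ hx).1
  have hAi_poly : ∀ i, IsPolyhedron (Ai i) := fun i => hAi i ▸ (hpoly i).inter ⟨l, xs i, c i, rfl⟩
  have hA_eq : A = ⋃ i, Ai i := by
    ext x
    obtain ⟨i, hxi⟩ := mem_iUnion.1 (hcover ▸ mem_univ x)
    simp only [hA, hAi, mem_iUnion, mem_ofPred_eq]
    refine ⟨fun hx => ⟨i, hxi, fun j => ?_⟩, fun ⟨i', hxi', hx⟩ j => ?_⟩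
    · linarith [hx j, hφ i x hxi j]
    · linarith [hx j, hφ i' x hxi' j]
  set 𝒢 := {F | F ⊆ Sw ∧ ∃ i, (Ai i).Nonempty ∧ IsExposedFace (Ai i) F ∧ F ⊆ Siw i}
  have h𝒢 : 𝒢.Finite := (finite_iUnion fun i => (hAi_poly i).finite_setOf_isExposedFace).subset
    fun F ⟨_, i, _, hF, _⟩ => mem_iUnion.2 ⟨i, hF⟩
  have hSw_eq : Sw = ⋃₀ 𝒢 := by
    refine Subset.antisymm (fun x hx => ?_) (sUnion_subset fun F hF => hF.1)
    rw [hSw] at hx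
    obtain ⟨g, hg, hmin⟩ := exists_pos_on_interior_le_of_convex_add hCconv hCcone hCint hconv
      (mem_image_of_mem f hx.1) (by rintro _ ⟨v, hv, rfl⟩ h; exact hx.2 ⟨v, hv, h⟩)
    obtain ⟨i, hxi⟩ := mem_iUnion.1 (hA_eq ▸ hx.1)
    obtain ⟨F, hF, hxF, hFSw, hFSiw⟩ := exists_isExposedFace_mem_subset_weakParetoSet hg
      (hA_eq ▸ subset_iUnion Ai i) (fun z hz => hf i z (hAiP i hz)) hxi
      fun v hv => hmin _ (mem_image_of_mem f hv)
    exact ⟨F, ⟨hSw ▸ hFSw, i, ⟨x, hxi⟩, hF, hSiw i ▸ hFSiw⟩, hxF⟩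
  obtain ⟨p, F, hF_eq, hF𝒢⟩ := h𝒢.exists_fin_eq_iUnion
  refine ⟨p, F, fun k => ?_, hSw_eq.trans hF_eq, fun k => (hF𝒢 k).2⟩
  obtain ⟨-, i, -, hFk, -⟩ := hF𝒢 k
  exact hFk.isPolyhedron (hAi_poly i)

/-- Structure of the weak Pareto solution set of a fully piecewise linear
vector optimization problem under the `C`-convexity assumption on `f(A)`: `S^w` is a
finite union of polyhedra, each of which is an exposed face of some `Aᵢ` contained in the
weak Pareto solution set `Sᵢ^w` of the corresponding linear subproblem. -/
theorem stmt_19 {X Y : Type*} [NormedAddCommGroup X] [NormedSpace ℝ X]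
    [NormedAddCommGroup Y] [NormedSpace ℝ Y]
    (C : Set Y) (hCconv : Convex ℝ C)
    (hCcone : ∀ t : ℝ, 0 ≤ t → t • C ⊆ C)
    (hCint : (interior C).Nonempty)
    {m l : ℕ}
    (P : Fin m → Set X)
    (hpoly : ∀ i, IsPolyhedron (P i)) (hcover : (⋃ i, P i) = Set.univ)
    (hint : ∀ i, (interior (P i)).Nonempty)
    (hdisj : ∀ i i', i ≠ i' → P i ∩ interior (P i') = ∅)
    (f : X → Y) (φ : Fin l → X → ℝ)
    (T : Fin m → X →L[ℝ] Y) (b : Fin m → Y)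
    (xs : Fin m → Fin l → X →L[ℝ] ℝ) (c : Fin m → Fin l → ℝ)
    (hf : ∀ i, ∀ x ∈ P i, f x = T i x + b i)
    (hφ : ∀ i, ∀ x ∈ P i, ∀ j, φ j x = xs i j x - c i j)
    (A : Set X) (hA : A = {x | ∀ j, φ j x ≤ 0})
    (Ai : Fin m → Set X) (hAi : ∀ i, Ai i = {x ∈ P i | ∀ j, xs i j x ≤ c i j})
    (Sw : Set X) (hSw : Sw = {x ∈ A | ¬ ∃ u ∈ A, f x - f u ∈ interior C})
    (Siw : Fin m → Set X)
    (hSiw : ∀ i, Siw i = {x ∈ Ai i | ¬ ∃ u ∈ Ai i, T i x - T i u ∈ interior C})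
    (hconv : Convex ℝ (f '' A + C)) :
    ∃ (p : ℕ) (F : Fin p → Set X),
      (∀ k, IsPolyhedron (F k)) ∧
      Sw = ⋃ k, F k ∧
      ∀ k, ∃ i, (Ai i).Nonempty ∧ IsExposedFace (Ai i) (F k) ∧ F k ⊆ Siw i :=
  stmt_19_general C hCconv hCcone hCint P hpoly hcover f φ T b xs c hf hφ A hA Ai hAi Sw hSw Siw
    hSiw hconv
end
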